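/- Let X be a countable subshift over a finite alphabet A and let c ∈ X be at level 1. Then there exist configurations y₁, y₂ ∈ X such that every y ∈ X with y ≺ c satisfies y ≈ y₁ or y ≈ y₂; that is, c has, up to shifts, at most two configurations strictly below it for ⪯. -/

import Mathlib

set_option linter.unusedSectionVars false
set_option linter.unusedTactic false
set_option linter.unusedVariables false
set_option maxHeartbeats 1000000


namespace CountableSubshift

/-- A configuration over alphabet `A` on the plane `ℤ × ℤ`. -/
abbrev Config (A : Type*) := ℤ × ℤ → A

variable {A : Type*}

/-- The shift by a vector `v`. -/
def shift (v : ℤ × ℤ) (x : Config A) : Config A := fun u => x (u + v)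

/-- The shift-orbit of a configuration. -/
def orbit (x : Config A) : Set (Config A) := Set.range fun v => shift v x

variable [TopologicalSpace A]

/-- `Preceq x y` iff `x` belongs to the closure of the shift-orbit of `y`. -/
def Preceq (x y : Config A) : Prop := x ∈ closure (orbit y)

/-- Strict version of `Preceq`. -/
def Prec (x y : Config A) : Prop := Preceq x y ∧ ¬ Preceq y x

/-- `x ≈ y` : mutual `Preceq`. -/
def OrbEquiv (x y : Config A) : Prop := Preceq x y ∧ Preceq y x

/-- A subshift: nonempty, closed and shift-invariant set of configurations. -/
def IsSubshift (X : Set (Config A)) : Prop :=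
  X.Nonempty ∧ IsClosed X ∧ ∀ v : ℤ × ℤ, shift v '' X = X

/-- A configuration is periodic if it has two linearly independent vectors of periodicity. -/
def Periodic (x : Config A) : Prop :=
  ∃ v w : ℤ × ℤ, shift v x = x ∧ shift w x = x ∧ LinearIndependent ℤ ![v, w]

/-- `x` is at level 0 in `X`: it is `Preceq`-minimal in `X`. -/
def Level0 (X : Set (Config A)) (x : Config A) : Prop :=
  x ∈ X ∧ ∀ y ∈ X, Preceq y x → Preceq x y

/-- `x` is at level 1 in `X`. -/
def Level1 (X : Set (Config A)) (x : Config A) : Prop :=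
  x ∈ X ∧ ¬ Level0 X x ∧ ∀ y ∈ X, Prec y x → Level0 X y

/-- `x` is at level 2 in `X`. -/
def Level2 (X : Set (Config A)) (x : Config A) : Prop :=
  x ∈ X ∧ ¬ Level0 X x ∧ ¬ Level1 X x ∧ ∀ y ∈ X, Prec y x → Level0 X y ∨ Level1 X y

/-- The pattern `p` with (finite) domain `D` appears in `x` at position `u`. -/
def AppearsAt (D : Finset (ℤ × ℤ)) (p : ℤ × ℤ → A) (x : Config A) (u : ℤ × ℤ) : Prop :=
  ∀ d ∈ D, x (u + d) = p d

/-- A subshift of finite type: the nonempty set of configurations avoiding a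
finite family of forbidden patterns. -/
def IsSFT (X : Set (Config A)) : Prop :=
  X.Nonempty ∧ ∃ (n : ℕ) (D : Fin n → Finset (ℤ × ℤ)) (p : Fin n → ℤ × ℤ → A),
    X = {x : Config A | ∀ (i : Fin n) (u : ℤ × ℤ), ¬ AppearsAt (D i) (p i) x u}

/-- Every pattern appearing in `c` appears at infinitely many positions. -/
def AllPatternsInfinite (c : Config A) : Prop :=
  ∀ (D : Finset (ℤ × ℤ)) (u : ℤ × ℤ),
    {u' : ℤ × ℤ | ∀ d ∈ D, c (u' + d) = c (u + d)}.Infinite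

/-- The standard dot product on `ℤ × ℤ`. -/
def dot (u w : ℤ × ℤ) : ℤ := u.1 * w.1 + u.2 * w.2

/-! ### basic shift algebra -/

lemma shift_shift (u v : ℤ × ℤ) (x : Config A) : shift u (shift v x) = shift (u + v) x := by
  funext w; simp [shift, add_assoc]

@[simp] lemma shift_zero (x : Config A) : shift 0 x = x := by funext w; simp [shift]

lemma continuous_shift (v : ℤ × ℤ) : Continuous (shift (A := A) v) := by
  apply continuous_pi; intro u; exact continuous_apply (u + v)

def shiftHomeo (v : ℤ × ℤ) : Config A ≃ₜ Config A where
  toFun := shift v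
  invFun := shift (-v)
  left_inv := fun x => by rw [shift_shift]; simp
  right_inv := fun x => by rw [shift_shift]; simp
  continuous_toFun := continuous_shift v
  continuous_invFun := continuous_shift (-v)

lemma mem_orbit_self (x : Config A) : x ∈ orbit x := ⟨0, shift_zero x⟩

lemma shift_mem_orbit (v : ℤ × ℤ) (x : Config A) : shift v x ∈ orbit x := ⟨v, rfl⟩

lemma orbit_shift (v : ℤ × ℤ) (x : Config A) : orbit (shift v x) = orbit x := by
  ext z; constructor
  · rintro ⟨w, rfl⟩; exact ⟨w + v, (shift_shift w v x).symm⟩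
  · rintro ⟨w, rfl⟩
    refine ⟨w - v, ?_⟩
    show shift (w - v) (shift v x) = shift w x
    rw [shift_shift]; congr 1; ring

lemma shift_image_orbit (v : ℤ × ℤ) (x : Config A) : shift v '' orbit x = orbit x := by
  ext z; constructor
  · rintro ⟨_, ⟨w, rfl⟩, rfl⟩; rw [shift_shift]; exact shift_mem_orbit _ _
  · rintro ⟨w, rfl⟩
    exact ⟨shift (w - v) x, shift_mem_orbit _ _, by rw [shift_shift]; congr 1; ring⟩

lemma shift_image_closure (v : ℤ × ℤ) (S : Set (Config A)) :
    shift v '' closure S = closure (shift v '' S) :=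
  (shiftHomeo v).image_closure S

lemma shift_mem_closure_orbit {v : ℤ × ℤ} {x y : Config A} (h : x ∈ closure (orbit y)) :
    shift v x ∈ closure (orbit y) := by
  have : shift v x ∈ shift v '' closure (orbit y) := ⟨x, h, rfl⟩
  rw [shift_image_closure, shift_image_orbit] at this; exact this

lemma preceq_refl (x : Config A) : Preceq x x := subset_closure (mem_orbit_self x)

lemma preceq_shift_left (v : ℤ × ℤ) (x : Config A) : Preceq (shift v x) x :=
  subset_closure (shift_mem_orbit v x)

lemma preceq_shift_right (v : ℤ × ℤ) (x : Config A) : Preceq x (shift v x) := by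
  show x ∈ closure (orbit (shift v x))
  rw [orbit_shift]
  exact subset_closure (mem_orbit_self x)

lemma orbEquiv_shift (v : ℤ × ℤ) (x : Config A) : OrbEquiv (shift v x) x :=
  ⟨preceq_shift_left v x, preceq_shift_right v x⟩

lemma closure_orbit_subset {x y : Config A} (h : Preceq x y) :
    closure (orbit x) ⊆ closure (orbit y) := by
  apply closure_minimal _ isClosed_closure
  rintro _ ⟨v, rfl⟩; exact shift_mem_closure_orbit h

lemma preceq_trans {x y z : Config A} (hxy : Preceq x y) (hyz : Preceq y z) : Preceq x z :=
  closure_orbit_subset hyz hxy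

/-! ### agreement -/

def Agr (n : ℕ) (x y : Config A) : Prop :=
  ∀ d : ℤ × ℤ, |d.1| ≤ (n : ℤ) → |d.2| ≤ (n : ℤ) → x d = y d

lemma Agr.symm {n : ℕ} {x y : Config A} (h : Agr n x y) : Agr n y x :=
  fun d h1 h2 => (h d h1 h2).symm

lemma Agr.mono {n m : ℕ} {x y : Config A} (h : Agr n x y) (hm : m ≤ n) : Agr m x y :=
  fun d h1 h2 => h d (h1.trans (by exact_mod_cast hm)) (h2.trans (by exact_mod_cast hm))

lemma Agr.trans {n : ℕ} {x y z : Config A} (h : Agr n x y) (h' : Agr n y z) : Agr n x z :=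
  fun d h1 h2 => (h d h1 h2).trans (h' d h1 h2)

lemma agr_refl (n : ℕ) (x : Config A) : Agr n x x := fun _ _ _ => rfl

lemma eq_of_agr_all {x y : Config A} (h : ∀ n, Agr n x y) : x = y := by
  funext d
  exact h (max d.1.natAbs d.2.natAbs) d
    (by rw [Int.abs_eq_natAbs]; exact_mod_cast le_max_left _ _)
    (by rw [Int.abs_eq_natAbs]; exact_mod_cast le_max_right _ _)

noncomputable def box (n : ℕ) : Finset (ℤ × ℤ) :=
  (Finset.Icc (-(n : ℤ)) n) ×ˢ (Finset.Icc (-(n : ℤ)) n)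

lemma mem_box {n : ℕ} {d : ℤ × ℤ} : d ∈ box n ↔ |d.1| ≤ (n : ℤ) ∧ |d.2| ≤ (n : ℤ) := by
  simp [box, Finset.mem_product, abs_le]

lemma agr_iff_box {n : ℕ} {x y : Config A} : Agr n x y ↔ ∀ d ∈ box n, x d = y d := by
  constructor
  · intro h d hd; rcases mem_box.1 hd with ⟨h1, h2⟩; exact h d h1 h2
  · intro h d h1 h2; exact h d (mem_box.2 ⟨h1, h2⟩)

variable [DiscreteTopology A] [Finite A]

lemma isClosed_agr (n : ℕ) (y : Config A) : IsClosed {x : Config A | Agr n x y} := by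
  have h : {x : Config A | Agr n x y} =
      ⋂ d ∈ (box n : Set (ℤ × ℤ)), {x : Config A | x d = y d} := by
    ext x; simp [agr_iff_box]
  rw [h]
  exact isClosed_biInter fun d _ => isClosed_eq (continuous_apply d) continuous_const

lemma isOpen_agr (n : ℕ) (y : Config A) : IsOpen {x : Config A | Agr n x y} := by
  have h : {x : Config A | Agr n x y} =
      ⋂ d ∈ (box n : Set (ℤ × ℤ)), {x : Config A | x d = y d} := by
    ext x; simp [agr_iff_box]
  rw [h]
  refine Set.Finite.isOpen_biInter ((box n).finite_toSet) (fun d _ => ?_)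
  have h2 : {x : Config A | x d = y d} = (fun x : Config A => x d) ⁻¹' {y d} := by
    ext x; simp
  rw [h2]
  exact IsOpen.preimage (continuous_apply d) (isOpen_discrete {y d})

lemma exists_agr_subset_of_isOpen {U : Set (Config A)} (hU : IsOpen U) {x : Config A}
    (hx : x ∈ U) : ∃ n : ℕ, ∀ z, Agr n z x → z ∈ U := by
  rcases isOpen_pi_iff.1 hU x hx with ⟨I, u, hIu, hsub⟩
  set f : ℤ × ℤ → ℕ := fun d => max d.1.natAbs d.2.natAbs with hf
  refine ⟨I.sup f, fun z hz => hsub ?_⟩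
  intro d hd
  have hd' : d ∈ I := hd
  have h1 : d.1.natAbs ≤ I.sup f := le_trans (le_max_left _ _) (Finset.le_sup (f := f) hd')
  have h2 : d.2.natAbs ≤ I.sup f := le_trans (le_max_right _ _) (Finset.le_sup (f := f) hd')
  have e : z d = x d := by
    apply hz d
    · rw [Int.abs_eq_natAbs]; exact_mod_cast h1
    · rw [Int.abs_eq_natAbs]; exact_mod_cast h2
  rw [e]; exact (hIu d hd').2

lemma mem_closure_iff_agr {S : Set (Config A)} {y : Config A} :
    y ∈ closure S ↔ ∀ n, ∃ x ∈ S, Agr n x y := by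
  constructor
  · intro h n
    rcases mem_closure_iff.1 h _ (isOpen_agr n y) (agr_refl n y) with ⟨x, hx1, hx2⟩
    exact ⟨x, hx2, hx1⟩
  · intro h
    rw [mem_closure_iff]
    intro O hO hyO
    rcases exists_agr_subset_of_isOpen hO hyO with ⟨n, hn⟩
    rcases h n with ⟨x, hxS, hx⟩
    exact ⟨x, hn x hx, hxS⟩

/-! ### norms and shifted agreement -/

def normZ (v : ℤ × ℤ) : ℕ := max v.1.natAbs v.2.natAbs

lemma abs_fst_le_normZ (v : ℤ × ℤ) : |v.1| ≤ (normZ v : ℤ) := by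
  rw [Int.abs_eq_natAbs]; exact_mod_cast le_max_left _ _

lemma abs_snd_le_normZ (v : ℤ × ℤ) : |v.2| ≤ (normZ v : ℤ) := by
  rw [Int.abs_eq_natAbs]; exact_mod_cast le_max_right _ _

lemma normZ_neg (v : ℤ × ℤ) : normZ (-v) = normZ v := by
  simp [normZ]

lemma agr_shift {n : ℕ} {x y : Config A} (e : ℤ × ℤ) (h : Agr (n + normZ e) x y) :
    Agr n (shift e x) (shift e y) := by
  intro d h1 h2
  show x (d + e) = y (d + e)
  have e1 : (d + e).1 = d.1 + e.1 := rfl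
  have e2 : (d + e).2 = d.2 + e.2 := rfl
  apply h
  · rw [e1]
    have ha := abs_fst_le_normZ e
    have hb : |d.1 + e.1| ≤ |d.1| + |e.1| := abs_add_le _ _
    push_cast
    omega
  · rw [e2]
    have ha := abs_snd_le_normZ e
    have hb : |d.2 + e.2| ≤ |d.2| + |e.2| := abs_add_le _ _
    push_cast
    omega

/-! ### isolated points -/

def IsoIn (K : Set (Config A)) (w : Config A) : Prop := ∃ n, ∀ z ∈ K, Agr n z w → z = w

lemma exists_isolated {Y : Set (Config A)} (hcl : IsClosed Y) (hcount : Y.Countable)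
    (hne : Y.Nonempty) : ∃ w ∈ Y, IsoIn Y w := by
  haveI : CompactSpace ↥Y := by rw [← isCompact_iff_compactSpace]; exact hcl.isCompact
  haveI : Countable ↥Y := hcount.to_subtype
  haveI : Nonempty ↥Y := hne.to_subtype
  haveI : WeaklyLocallyCompactSpace ↥Y := inferInstance
  haveI : LocallyCompactSpace ↥Y := inferInstance
  haveI : BaireSpace ↥Y := inferInstance
  obtain ⟨i, x, hx⟩ := nonempty_interior_of_iUnion_of_closed
    (f := fun i : ↥Y => ({i} : Set ↥Y)) (fun i => isClosed_singleton)
    (by ext j; simp)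
  have hxi' : x ∈ ({i} : Set ↥Y) := interior_subset hx
  have hxi : x = i := hxi'
  subst hxi
  have hopen : IsOpen ({x} : Set ↥Y) := by
    rw [isOpen_iff_mem_nhds]
    rintro y rfl
    exact mem_interior_iff_mem_nhds.1 hx
  rcases isOpen_induced_iff.1 hopen with ⟨U, hU, hUeq⟩
  have hxU : (x : Config A) ∈ U := by
    have : x ∈ (Subtype.val ⁻¹' U : Set ↥Y) := by rw [hUeq]; rfl
    exact this
  rcases exists_agr_subset_of_isOpen hU hxU with ⟨n, hn⟩
  refine ⟨x, x.2, n, fun z hz hagr => ?_⟩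
  have : (⟨z, hz⟩ : ↥Y) ∈ (Subtype.val ⁻¹' U : Set ↥Y) := hn z hagr
  rw [hUeq] at this
  exact congrArg Subtype.val this

def Inv (K : Set (Config A)) : Prop := ∀ (e : ℤ × ℤ) z, z ∈ K → shift e z ∈ K

lemma inv_closure_orbit (x : Config A) : Inv (closure (orbit x)) :=
  fun _ _ hz => shift_mem_closure_orbit hz

lemma isoIn_shift {K : Set (Config A)} (hK : Inv K) {w : Config A} (h : IsoIn K w)
    (v : ℤ × ℤ) : IsoIn K (shift v w) := by
  rcases h with ⟨n, hn⟩
  refine ⟨n + normZ v, fun z hz hagr => ?_⟩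
  have h2 : Agr n (shift (-v) z) (shift (-v) (shift v w)) := by
    apply agr_shift
    rw [normZ_neg]
    exact hagr
  rw [shift_shift] at h2
  simp only [neg_add_cancel, shift_zero] at h2
  have h3 : shift (-v) z = w := hn _ (hK _ _ hz) h2
  have := congrArg (shift v) h3
  rw [shift_shift] at this
  simp only [add_neg_cancel, shift_zero] at this
  exact this

/-! ### level 0 points have finite orbit closure -/

lemma subset_of_subshift {X : Set (Config A)} (hX : IsSubshift X) {z : Config A} (hz : z ∈ X) :
    closure (orbit z) ⊆ X := by
  apply closure_minimal _ hX.2.1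
  rintro _ ⟨v, rfl⟩
  rw [← hX.2.2 v]
  exact ⟨z, hz, rfl⟩

lemma orbit_finite_of_level0 {X : Set (Config A)} (hX : IsSubshift X) (hcount : X.Countable)
    {z : Config A} (hz : Level0 X z) :
    (closure (orbit z)).Finite ∧ closure (orbit z) = orbit z := by
  set O := closure (orbit z) with hO
  have hOX : O ⊆ X := subset_of_subshift hX hz.1
  have hOcl : IsClosed O := isClosed_closure
  have hOcount : O.Countable := hcount.mono hOX
  have hOne : O.Nonempty := ⟨z, subset_closure (mem_orbit_self z)⟩
  have hOinv : Inv O := inv_closure_orbit z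
  obtain ⟨w, hwO, hwiso⟩ := exists_isolated hOcl hOcount hOne
  -- every element of O is in the orbit of w
  have horb : ∀ x ∈ O, x ∈ orbit w := by
    intro x hxO
    have hxz : Preceq x z := hxO
    have hzx : Preceq z x := hz.2 x (hOX hxO) hxz
    have hsub : O ⊆ closure (orbit x) := closure_orbit_subset hzx
    have hw : w ∈ closure (orbit x) := hsub hwO
    rcases hwiso with ⟨n, hn⟩
    rcases mem_closure_iff_agr.1 hw n with ⟨y, hy, hagr⟩
    have hyO : y ∈ O := by
      rcases hy with ⟨v, rfl⟩
      exact hOinv v x hxO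
    have hyw : y = w := hn y hyO hagr
    subst hyw
    rcases hy with ⟨v, hv⟩
    have hv' : shift v x = y := hv
    refine ⟨-v, ?_⟩
    show shift (-v) y = x
    rw [← hv', shift_shift]
    simp
  have hOw : O = orbit w := by
    apply Set.Subset.antisymm
    · exact fun x hx => horb x hx
    · rintro _ ⟨v, rfl⟩
      exact hOinv v w hwO
  -- finiteness
  have hiso : ∀ x ∈ O, IsoIn O x := by
    intro x hx
    rcases horb x hx with ⟨v, rfl⟩
    exact isoIn_shift hOinv hwiso v
  choose! rad hrad using hiso
  have hcover : O ⊆ ⋃ i : ↥O, {z' : Config A | Agr (rad i) z' i} :=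
    fun x hx => Set.mem_iUnion.2 ⟨⟨x, hx⟩, agr_refl _ _⟩
  obtain ⟨t, ht⟩ := hOcl.isCompact.elim_finite_subcover
    (fun i : ↥O => {z' : Config A | Agr (rad i) z' i}) (fun i => isOpen_agr _ _) hcover
  have hfin : O ⊆ (Subtype.val '' (t : Set ↥O)) := by
    intro x hx
    rcases Set.mem_iUnion₂.1 (ht hx) with ⟨i, hit, hagr⟩
    have : x = (i : Config A) := hrad i i.2 x hx hagr
    exact ⟨i, hit, this.symm⟩
  have hfinite : O.Finite := Set.Finite.subset ((t.finite_toSet).image _) hfin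
  constructor
  · exact hfinite
  · rcases horb z (subset_closure (mem_orbit_self z)) with ⟨v, hv⟩
    have horbz : orbit z = orbit w := by rw [← hv, orbit_shift]
    exact hOw.trans horbz.symm

/-! ### paths in the plane staying far from the origin -/

lemma normZ_ge_of_fst {R : ℕ} {w : ℤ × ℤ} (h : (R : ℤ) ≤ |w.1|) : R ≤ normZ w := by
  have : (R : ℤ) ≤ (w.1.natAbs : ℤ) := by rwa [Int.abs_eq_natAbs] at h
  have : R ≤ w.1.natAbs := by exact_mod_cast this
  exact le_trans this (le_max_left _ _)

lemma normZ_ge_of_snd {R : ℕ} {w : ℤ × ℤ} (h : (R : ℤ) ≤ |w.2|) : R ≤ normZ w := by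
  have : (R : ℤ) ≤ (w.2.natAbs : ℤ) := by rwa [Int.abs_eq_natAbs] at h
  have : R ≤ w.2.natAbs := by exact_mod_cast this
  exact le_trans this (le_max_right _ _)

lemma normZ_ge_cases {R : ℕ} {w : ℤ × ℤ} (h : R ≤ normZ w) :
    (R : ℤ) ≤ |w.1| ∨ (R : ℤ) ≤ |w.2| := by
  unfold normZ at h
  rcases le_total w.1.natAbs w.2.natAbs with hc | hc
  · right
    rw [Int.abs_eq_natAbs]
    have h2 : R ≤ w.2.natAbs := le_trans h (max_le hc le_rfl)
    exact_mod_cast h2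
  · left
    rw [Int.abs_eq_natAbs]
    have h2 : R ≤ w.1.natAbs := le_trans h (max_le le_rfl hc)
    exact_mod_cast h2

def Conn (R : ℕ) (a b : ℤ × ℤ) : Prop :=
  ∃ (k : ℕ) (pf : ℕ → ℤ × ℤ), pf 0 = a ∧ pf k = b ∧
    (∀ j < k, normZ (pf (j + 1) - pf j) ≤ 1) ∧ ∀ j ≤ k, R ≤ normZ (pf j)

lemma Conn.symm {R : ℕ} {a b : ℤ × ℤ} (h : Conn R a b) : Conn R b a := by
  rcases h with ⟨k, pf, h0, hk, hstep, hnorm⟩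
  refine ⟨k, fun j => pf (k - j), by simp [hk], by simp [Nat.sub_self, h0], ?_, ?_⟩
  · intro j hj
    show normZ (pf (k - (j + 1)) - pf (k - j)) ≤ 1
    have e : k - j = (k - (j + 1)) + 1 := by omega
    have h2 := hstep (k - (j + 1)) (by omega)
    rw [← e] at h2
    have eq2 : pf (k - (j + 1)) - pf (k - j) = -(pf (k - j) - pf (k - (j + 1))) := by ring
    rw [eq2, normZ_neg]
    exact h2
  · intro j hj
    exact hnorm _ (by omega)

lemma Conn.trans {R : ℕ} {a b c : ℤ × ℤ} (h1 : Conn R a b) (h2 : Conn R b c) : Conn R a c := by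
  rcases h1 with ⟨k1, p1, e0, e1, st1, no1⟩
  rcases h2 with ⟨k2, p2, f0, f1, st2, no2⟩
  refine ⟨k1 + k2, fun j => if j < k1 then p1 j else p2 (j - k1), ?_, ?_, ?_, ?_⟩
  · by_cases h : 0 < k1
    · simp only [if_pos h, e0]
    · have hk10 : k1 = 0 := by omega
      simp only [if_neg h]
      rw [show 0 - k1 = 0 from by omega, f0, ← e1, hk10, e0]
  · have h : ¬ (k1 + k2 < k1) := by omega
    simp only [if_neg h]
    rw [show k1 + k2 - k1 = k2 from by omega, f1]
  · intro j hj
    by_cases hj1 : j + 1 < k1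
    · simp only [if_pos hj1, if_pos (by omega : j < k1)]
      exact st1 j (by omega)
    · by_cases hj2 : j < k1
      · have hjk : j + 1 = k1 := by omega
        simp only [if_neg hj1, if_pos hj2]
        rw [show j + 1 - k1 = 0 from by omega, f0, ← e1, ← hjk]
        exact st1 j (by omega)
      · simp only [if_neg hj1, if_neg hj2, if_neg (show ¬ (j + 1 < k1) from by omega)]
        rw [show j + 1 - k1 = (j - k1) + 1 from by omega]
        exact st2 (j - k1) (by omega)
  · intro j hj
    by_cases hj1 : j < k1
    · simp only [if_pos hj1]; exact no1 j (by omega)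
    · simp only [if_neg hj1]; exact no2 (j - k1) (by omega)

lemma conn_segH {R : ℕ} (a : ℤ × ℤ) (b1 : ℤ)
    (h : ∀ x : ℤ, min a.1 b1 ≤ x → x ≤ max a.1 b1 → R ≤ normZ (x, a.2)) :
    Conn R a (b1, a.2) := by
  set ε : ℤ := if a.1 ≤ b1 then 1 else -1 with hε
  have hεabs : ε = 1 ∨ ε = -1 := by
    rcases le_or_gt a.1 b1 with hc | hc
    · left; rw [hε, if_pos hc]
    · right; rw [hε, if_neg (by omega)]
  have hend : a.1 + ε * ((b1 - a.1).natAbs : ℤ) = b1 := by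
    rcases le_or_gt a.1 b1 with hc | hc
    · rw [hε, if_pos hc]; omega
    · rw [hε, if_neg (by omega)]; omega
  have hrange : ∀ j : ℕ, j ≤ (b1 - a.1).natAbs →
      min a.1 b1 ≤ a.1 + ε * j ∧ a.1 + ε * j ≤ max a.1 b1 := by
    intro j hj
    have hj' : (j : ℤ) ≤ ((b1 - a.1).natAbs : ℤ) := by exact_mod_cast hj
    have hj0 : (0 : ℤ) ≤ (j : ℤ) := Int.ofNat_nonneg j
    rcases le_or_gt a.1 b1 with hc | hc
    · rw [hε, if_pos hc]; omega
    · rw [hε, if_neg (by omega)]; omega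
  refine ⟨(b1 - a.1).natAbs, fun j => (a.1 + ε * j, a.2), by simp, ?_, ?_, ?_⟩
  · show (a.1 + ε * ((b1 - a.1).natAbs : ℤ), a.2) = (b1, a.2)
    rw [hend]
  · intro j hj
    show normZ ((a.1 + ε * (j + 1 : ℕ), a.2) - (a.1 + ε * j, a.2)) ≤ 1
    have e : ((a.1 + ε * (j + 1 : ℕ), a.2) : ℤ × ℤ) - (a.1 + ε * j, a.2) = (ε, 0) := by
      apply Prod.ext
      · show a.1 + ε * ((j : ℤ) + 1) - (a.1 + ε * j) = ε
        ring
      · show a.2 - a.2 = 0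
        ring
    rw [e]
    rcases hεabs with he | he <;> simp [he, normZ]
  · intro j hj
    show R ≤ normZ (a.1 + ε * j, a.2)
    rcases hrange j hj with ⟨hr1, hr2⟩
    exact h _ hr1 hr2

lemma conn_segV {R : ℕ} (a : ℤ × ℤ) (b2 : ℤ)
    (h : ∀ y : ℤ, min a.2 b2 ≤ y → y ≤ max a.2 b2 → R ≤ normZ (a.1, y)) :
    Conn R a (a.1, b2) := by
  have swap : ∀ u v : ℤ × ℤ, Conn R (u.2, u.1) (v.2, v.1) → Conn R u v := by
    rintro u v ⟨k, pf, h0, hk, hstep, hnorm⟩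
    refine ⟨k, fun j => ((pf j).2, (pf j).1), ?_, ?_, ?_, ?_⟩
    · show ((pf 0).2, (pf 0).1) = u
      rw [h0]
    · show ((pf k).2, (pf k).1) = v
      rw [hk]
    · intro j hj
      have h2 := hstep j hj
      show normZ (((pf (j + 1)).2, (pf (j + 1)).1) - ((pf j).2, (pf j).1)) ≤ 1
      have e : (((pf (j + 1)).2, (pf (j + 1)).1) : ℤ × ℤ) - ((pf j).2, (pf j).1)
          = ((pf (j + 1) - pf j).2, (pf (j + 1) - pf j).1) := rfl
      rw [e]
      unfold normZ at h2 ⊢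
      omega
    · intro j hj
      have h2 := hnorm j hj
      show R ≤ normZ ((pf j).2, (pf j).1)
      unfold normZ at h2 ⊢
      omega
  apply swap
  have h2 : Conn R (a.2, a.1) (b2, a.1) := by
    apply conn_segH (a.2, a.1) b2
    intro x hx1 hx2
    have := h x hx1 hx2
    unfold normZ at this ⊢
    omega
  exact h2

lemma conn_to_corner {R : ℕ} (v : ℤ × ℤ) (h : R ≤ normZ v) (M : ℤ) (hMR : (R : ℤ) ≤ M)
    (hM1 : |v.1| ≤ M) (hM2 : |v.2| ≤ M) : Conn R v (M, M) := by
  have hMabs : (R : ℤ) ≤ |M| := le_trans hMR (le_abs_self M)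
  rcases normZ_ge_cases h with hcase | hcase
  · have p1 : Conn R v (v.1, M) := conn_segV v M (fun y _ _ => normZ_ge_of_fst hcase)
    have p2 : Conn R (v.1, M) (M, M) := by
      have := conn_segH (v.1, M) M (fun x _ _ => normZ_ge_of_snd (by simpa using hMabs))
      simpa using this
    exact p1.trans p2
  · have p1 : Conn R v (M, v.2) := conn_segH v M (fun x _ _ => normZ_ge_of_snd hcase)
    have p2 : Conn R (M, v.2) (M, M) := by
      have := conn_segV (M, v.2) M (fun y _ _ => normZ_ge_of_fst (by simpa using hMabs))
      simpa using this
    exact p1.trans p2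

lemma conn_of_far {R : ℕ} (v₁ v₂ : ℤ × ℤ) (h₁ : R ≤ normZ v₁) (h₂ : R ≤ normZ v₂) :
    Conn R v₁ v₂ := by
  set M : ℤ := (R : ℤ) + |v₁.1| + |v₁.2| + |v₂.1| + |v₂.2| with hM
  have a1 := abs_nonneg v₁.1
  have a2 := abs_nonneg v₁.2
  have a3 := abs_nonneg v₂.1
  have a4 := abs_nonneg v₂.2
  have hR0 : (0 : ℤ) ≤ (R : ℤ) := Int.ofNat_nonneg R
  have c1 : Conn R v₁ (M, M) := conn_to_corner v₁ h₁ M (by omega) (by omega) (by omega)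
  have c2 : Conn R v₂ (M, M) := conn_to_corner v₂ h₂ M (by omega) (by omega) (by omega)
  exact c1.trans c2.symm

/-! ### coset decomposition -/

lemma coset_decomp (p q : ℤ × ℤ) (hd : p.1 * q.2 - p.2 * q.1 ≠ 0) (v : ℤ × ℤ) :
    ∃ a b : ℤ, ∃ g : ℤ × ℤ, v = (a * p.1 + b * q.1 + g.1, a * p.2 + b * q.2 + g.2) ∧
      |g.1| ≤ |p.1| + |q.1| ∧ |g.2| ≤ |p.2| + |q.2| := by
  set δ : ℤ := p.1 * q.2 - p.2 * q.1 with hδ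
  set D : ℤ := |δ| with hD
  have hD0 : 0 < D := abs_pos.2 hd
  set num1 : ℤ := v.1 * q.2 - v.2 * q.1 with hnum1
  set num2 : ℤ := p.1 * v.2 - p.2 * v.1 with hnum2
  set a0 : ℤ := num1 / D with ha0
  set b0 : ℤ := num2 / D with hb0
  set r1 : ℤ := num1 % D with hr1
  set r2 : ℤ := num2 % D with hr2
  have hE2 : D * a0 + r1 = num1 := Int.mul_ediv_add_emod num1 D
  have hE3 : D * b0 + r2 = num2 := Int.mul_ediv_add_emod num2 D
  have hr1n : 0 ≤ r1 := Int.emod_nonneg num1 (by omega)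
  have hr1l : r1 < D := Int.emod_lt_of_pos num1 hD0
  have hr2n : 0 ≤ r2 := Int.emod_nonneg num2 (by omega)
  have hr2l : r2 < D := Int.emod_lt_of_pos num2 hD0
  set σ : ℤ := if 0 ≤ δ then 1 else -1 with hσ
  set a : ℤ := a0 * σ with ha
  set b : ℤ := b0 * σ with hb
  have hE4 : a * δ = a0 * D := by
    rcases le_or_gt 0 δ with hcc | hcc
    · rw [ha, hσ, if_pos hcc, hD, abs_of_nonneg hcc]; ring
    · rw [ha, hσ, if_neg (by omega), hD, abs_of_neg hcc]; ring
  have hE5 : b * δ = b0 * D := by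
    rcases le_or_gt 0 δ with hcc | hcc
    · rw [hb, hσ, if_pos hcc, hD, abs_of_nonneg hcc]; ring
    · rw [hb, hσ, if_neg (by omega), hD, abs_of_neg hcc]; ring
  set g : ℤ × ℤ := (v.1 - a * p.1 - b * q.1, v.2 - a * p.2 - b * q.2) with hg
  have hid1 : δ * g.1 = r1 * p.1 + r2 * q.1 := by
    have hE1 : δ * v.1 = num1 * p.1 + num2 * q.1 := by rw [hδ, hnum1, hnum2]; ring
    have hgg : g.1 = v.1 - a * p.1 - b * q.1 := rfl
    rw [hgg]
    linear_combination hE1 - p.1 * hE2 - p.1 * hE4 - q.1 * hE3 - q.1 * hE5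
  have hid2 : δ * g.2 = r1 * p.2 + r2 * q.2 := by
    have hE1 : δ * v.2 = num1 * p.2 + num2 * q.2 := by rw [hδ, hnum1, hnum2]; ring
    have hgg : g.2 = v.2 - a * p.2 - b * q.2 := rfl
    rw [hgg]
    linear_combination hE1 - p.2 * hE2 - p.2 * hE4 - q.2 * hE3 - q.2 * hE5
  have hbound : ∀ x y : ℤ, δ * x = r1 * y + r2 * (D * x - r1 * y) / D → True := fun _ _ _ => trivial
  have key : ∀ (gi pi qi : ℤ), δ * gi = r1 * pi + r2 * qi → |gi| ≤ |pi| + |qi| := by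
    intro gi pi qi hidd
    have h1 : |δ * gi| ≤ r1 * |pi| + r2 * |qi| := by
      rw [hidd]
      calc |r1 * pi + r2 * qi| ≤ |r1 * pi| + |r2 * qi| := abs_add_le _ _
        _ = r1 * |pi| + r2 * |qi| := by rw [abs_mul, abs_mul, abs_of_nonneg hr1n, abs_of_nonneg hr2n]
    have h2 : r1 * |pi| + r2 * |qi| ≤ (D - 1) * |pi| + (D - 1) * |qi| := by
      have := abs_nonneg pi
      have := abs_nonneg qi
      have := mul_le_mul_of_nonneg_right (show r1 ≤ D - 1 by omega) (abs_nonneg pi)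
      have := mul_le_mul_of_nonneg_right (show r2 ≤ D - 1 by omega) (abs_nonneg qi)
      omega
    have h3 : |δ * gi| = D * |gi| := by rw [abs_mul, hD]
    have h4 : D * |gi| ≤ D * (|pi| + |qi|) := by
      have h5 : (D - 1) * |pi| + (D - 1) * |qi| ≤ D * (|pi| + |qi|) := by
        have := abs_nonneg pi
        have := abs_nonneg qi
        nlinarith
      omega
    exact le_of_mul_le_mul_left h4 hD0
  refine ⟨a, b, g, ?_, key g.1 p.1 q.1 hid1, key g.2 p.2 q.2 hid2⟩
  apply Prod.ext
  · show v.1 = a * p.1 + b * q.1 + (v.1 - a * p.1 - b * q.1)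
    ring
  · show v.2 = a * p.2 + b * q.2 + (v.2 - a * p.2 - b * q.2)
    ring

/-! ### iterated periods -/

lemma shift_period_smul {x : Config A} {t : ℤ × ℤ} (h : shift t x = x) (b : ℤ) :
    shift (b * t.1, b * t.2) x = x := by
  induction b using Int.induction_on with
  | zero => simp; funext u; show x (u + (0, 0)) = x u; rw [Prod.mk_zero_zero, add_zero]
  | succ k ih =>
    have e : (((k : ℤ) + 1) * t.1, ((k : ℤ) + 1) * t.2) = (((k : ℤ) * t.1, (k : ℤ) * t.2) + t : ℤ × ℤ) := by
      apply Prod.ext <;> (show _ = _ + _; ring)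
    rw [e, ← shift_shift, h, ih]
  | pred k ih =>
    have e : (((-k : ℤ) - 1) * t.1, ((-k : ℤ) - 1) * t.2) = (((-k : ℤ) * t.1, (-k : ℤ) * t.2) + (-t) : ℤ × ℤ) := by
      apply Prod.ext <;> (show _ = _ + _; simp; ring)
    have hneg : shift (-t) x = x := by
      have := congrArg (shift (-t)) h
      rw [shift_shift] at this
      simpa using this.symm
    rw [e, ← shift_shift, hneg, ih]

/-! ### nested intersections and local pattern membership -/

lemma inter_closure_nonempty {E : ℕ → Set (Config A)} (hne : ∀ N, (E N).Nonempty)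
    (hmono : ∀ N, E (N + 1) ⊆ E N) : (⋂ N, closure (E N)).Nonempty := by
  apply IsCompact.nonempty_iInter_of_sequence_nonempty_isCompact_isClosed
    (fun N => closure (E N))
  · intro i
    exact closure_mono (hmono i)
  · intro i
    exact (hne i).closure
  · exact isClosed_closure.isCompact
  · intro i
    exact isClosed_closure

def Pp (r : ℕ) (U : Set (Config A)) (x : Config A) : Prop := ∃ u ∈ U, Agr r x u

lemma pp_mono {r r' : ℕ} {U : Set (Config A)} {x : Config A} (h : Pp r U x) (hr : r' ≤ r) :
    Pp r' U x := by
  rcases h with ⟨u, hu, hagr⟩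
  exact ⟨u, hu, hagr.mono hr⟩

lemma isClosed_pp {r : ℕ} {U : Set (Config A)} (hU : U.Finite) :
    IsClosed {x : Config A | Pp r U x} := by
  have h : {x : Config A | Pp r U x} = ⋃ u ∈ U, {x : Config A | Agr r x u} := by
    ext x; simp [Pp]
  rw [h]
  exact hU.isClosed_biUnion fun u _ => isClosed_agr r u

lemma isOpen_pp {r : ℕ} {U : Set (Config A)} (hU : U.Finite) :
    IsOpen {x : Config A | Pp r U x} := by
  have h : {x : Config A | Pp r U x} = ⋃ u ∈ U, {x : Config A | Agr r x u} := by
    ext x; simp [Pp]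
  rw [h]
  exact isOpen_biUnion fun u _ => isOpen_agr r u

lemma pp_shift {r r' : ℕ} {U : Set (Config A)} {x : Config A} (e : ℤ × ℤ)
    (hU : ∀ u ∈ U, shift e u ∈ U) (h : Pp r' U x) (hr : r + normZ e ≤ r') :
    Pp r U (shift e x) := by
  rcases h with ⟨u, hu, hagr⟩
  exact ⟨shift e u, hU u hu, agr_shift e (hagr.mono hr)⟩

/-! ### limit sets -/

def farOrb (c : Config A) (R : ℕ) : Set (Config A) :=
  {y | ∃ v : ℤ × ℤ, R ≤ normZ v ∧ y = shift v c}

def limitSet (c : Config A) : Set (Config A) := ⋂ R : ℕ, closure (farOrb c R)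

def tailP (s : ℤ × ℤ) (c : Config A) (N : ℕ) : Set (Config A) :=
  {y | ∃ n : ℤ, (N : ℤ) ≤ n ∧ y = shift (n * s.1, n * s.2) c}

def omegaP (s : ℤ × ℤ) (c : Config A) : Set (Config A) := ⋂ N : ℕ, closure (tailP s c N)

def sOrb (s : ℤ × ℤ) (w : Config A) : Set (Config A) :=
  Set.range fun k : ℤ => shift (k * s.1, k * s.2) w

lemma isClosed_limitSet (c : Config A) : IsClosed (limitSet c) :=
  isClosed_iInter fun _ => isClosed_closure

lemma isClosed_omegaP (s : ℤ × ℤ) (c : Config A) : IsClosed (omegaP s c) :=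
  isClosed_iInter fun _ => isClosed_closure

lemma limitSet_subset_Y (c : Config A) : limitSet c ⊆ closure (orbit c) := by
  intro x hx
  have h := Set.mem_iInter.1 hx 0
  exact closure_mono (fun y hy => by rcases hy with ⟨v, _, rfl⟩; exact shift_mem_orbit v c) h

lemma omegaP_subset_Y (s : ℤ × ℤ) (c : Config A) : omegaP s c ⊆ closure (orbit c) := by
  intro x hx
  have h := Set.mem_iInter.1 hx 0
  exact closure_mono (fun y hy => by rcases hy with ⟨n, _, rfl⟩; exact shift_mem_orbit _ c) h

lemma limitSet_nonempty (c : Config A) : (limitSet c).Nonempty := by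
  apply inter_closure_nonempty
  · intro N
    exact ⟨shift ((N : ℤ), 0) c, ((N : ℤ), 0), by simp [normZ], rfl⟩
  · rintro N y ⟨v, hv, rfl⟩
    exact ⟨v, by omega, rfl⟩

lemma omegaP_nonempty (s : ℤ × ℤ) (c : Config A) : (omegaP s c).Nonempty := by
  apply inter_closure_nonempty
  · intro N
    exact ⟨shift ((N : ℤ) * s.1, (N : ℤ) * s.2) c, (N : ℤ), le_refl _, rfl⟩
  · rintro N y ⟨n, hn, rfl⟩
    exact ⟨n, by omega, rfl⟩

lemma limitSet_shift {c : Config A} {x : Config A} (hx : x ∈ limitSet c) (e : ℤ × ℤ) :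
    shift e x ∈ limitSet c := by
  apply Set.mem_iInter.2
  intro R
  have hx' := Set.mem_iInter.1 hx (R + normZ e)
  have himg : shift e '' farOrb c (R + normZ e) ⊆ farOrb c R := by
    rintro y ⟨z, ⟨v, hv, rfl⟩, rfl⟩
    refine ⟨v + e, ?_, by rw [shift_shift, add_comm e v]⟩
    have h1 := abs_fst_le_normZ e
    have h2 := abs_snd_le_normZ e
    rcases normZ_ge_cases hv with hcase | hcase
    · apply normZ_ge_of_fst
      have he1 : (v + e).1 = v.1 + e.1 := rfl
      rw [he1]
      have h3 : |v.1| - |(-e.1)| ≤ |v.1 - (-e.1)| := abs_sub_abs_le_abs_sub v.1 (-e.1)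
      rw [abs_neg, sub_neg_eq_add] at h3
      push_cast at hcase ⊢
      omega
    · apply normZ_ge_of_snd
      have he2 : (v + e).2 = v.2 + e.2 := rfl
      rw [he2]
      have h3 : |v.2| - |(-e.2)| ≤ |v.2 - (-e.2)| := abs_sub_abs_le_abs_sub v.2 (-e.2)
      rw [abs_neg, sub_neg_eq_add] at h3
      push_cast at hcase ⊢
      omega
  have : shift e x ∈ shift e '' closure (farOrb c (R + normZ e)) := ⟨x, hx', rfl⟩
  rw [shift_image_closure] at this
  exact closure_mono himg this

lemma omegaP_shift_smul {s : ℤ × ℤ} {c x : Config A} (hx : x ∈ omegaP s c) (k : ℤ) :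
    shift (k * s.1, k * s.2) x ∈ omegaP s c := by
  apply Set.mem_iInter.2
  intro N
  have hx' := Set.mem_iInter.1 hx (N + k.natAbs)
  have himg : shift (k * s.1, k * s.2) '' tailP s c (N + k.natAbs) ⊆ tailP s c N := by
    rintro y ⟨z, ⟨n, hn, rfl⟩, rfl⟩
    refine ⟨n + k, ?_, ?_⟩
    · have : (k.natAbs : ℤ) = |k| := (Int.abs_eq_natAbs k).symm
      push_cast at hn
      have := abs_nonneg k
      have := le_abs_self k
      have := neg_abs_le k
      omega
    · rw [shift_shift]
      have e2 : ((k * s.1, k * s.2) + (n * s.1, n * s.2) : ℤ × ℤ)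
          = ((n + k) * s.1, (n + k) * s.2) := by
        apply Prod.ext
        · show k * s.1 + n * s.1 = (n + k) * s.1
          ring
        · show k * s.2 + n * s.2 = (n + k) * s.2
          ring
      rw [e2]
  have : shift (k * s.1, k * s.2) x ∈
      shift (k * s.1, k * s.2) '' closure (tailP s c (N + k.natAbs)) := ⟨x, hx', rfl⟩
  rw [shift_image_closure] at this
  exact closure_mono himg this

/-! ### the 2D barrier argument -/

lemma barrier_2d {c w : Config A} (hw : w ∈ limitSet c) (hfin : (orbit w).Finite)
    (hiso : ∀ u ∈ orbit w, IsoIn (limitSet c) u) : limitSet c ⊆ orbit w := by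
  classical
  choose! rad hrad using hiso
  set U := orbit w with hU
  set L := limitSet c with hL
  set m₀ := hfin.toFinset.sup rad with hm₀def
  have hm₀ : ∀ u ∈ U, ∀ z ∈ L, Agr m₀ z u → z = u := by
    intro u hu z hz hagr
    exact hrad u hu z hz (hagr.mono (Finset.le_sup (hfin.mem_toFinset.2 hu)))
  set CAP := m₀ + 2 with hCAP
  by_contra hcon
  rw [Set.not_subset] at hcon
  obtain ⟨y, hyL, hyU⟩ := hcon
  have hUshift : ∀ e : ℤ × ℤ, ∀ u ∈ U, shift e u ∈ U := by
    rintro e _ ⟨v, rfl⟩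
    rw [shift_shift]
    exact ⟨e + v, rfl⟩
  have hynp : ∀ x, Agr CAP x y → ¬ Pp m₀ U x := by
    rintro x hxy ⟨u, hu, hxu⟩
    exact hyU (hm₀ u hu y hyL ((hxy.symm.mono (by omega)).trans (hxu.mono (by omega))) ▸ hu)
  have hG : ∀ R : ℕ, ∃ v : ℤ × ℤ, R ≤ normZ v ∧ Pp (m₀ + 1) U (shift v c) ∧
      ¬ Pp CAP U (shift v c) := by
    intro R
    have hw' := Set.mem_iInter.1 hw R
    rcases mem_closure_iff_agr.1 hw' CAP with ⟨x1, ⟨v₁, hv₁, rfl⟩, hagr1⟩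
    have hPv₁ : Pp CAP U (shift v₁ c) := ⟨w, mem_orbit_self w, hagr1⟩
    have hy' := Set.mem_iInter.1 hyL R
    rcases mem_closure_iff_agr.1 hy' CAP with ⟨x2, ⟨v₂, hv₂, rfl⟩, hagr2⟩
    have hnPv₂ : ¬ Pp m₀ U (shift v₂ c) := hynp _ hagr2
    obtain ⟨k, pf, hp0, hpk, hstep, hnorm⟩ := conn_of_far v₁ v₂ hv₁ hv₂
    have hex : ∃ j, j ≤ k ∧ ¬ Pp CAP U (shift (pf j) c) := by
      refine ⟨k, le_rfl, ?_⟩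
      rw [hpk]
      exact fun h => hnPv₂ (pp_mono h (by omega))
    set j₀ := Nat.find hex with hj₀def
    obtain ⟨hj₀k, hj₀n⟩ := Nat.find_spec hex
    have hj₀pos : 0 < j₀ := by
      rcases Nat.eq_zero_or_pos j₀ with h0 | h
      · exfalso
        apply hj₀n
        rw [show pf j₀ = v₁ from by rw [h0, hp0]]
        exact hPv₁
      · exact h
    have hprev : Pp CAP U (shift (pf (j₀ - 1)) c) := by
      by_contra hc2
      exact Nat.find_min hex (show j₀ - 1 < j₀ by omega) ⟨by omega, hc2⟩
    set e := pf j₀ - pf (j₀ - 1) with he_def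
    have he : normZ e ≤ 1 := by
      have h2 := hstep (j₀ - 1) (by omega)
      rw [show j₀ - 1 + 1 = j₀ from by omega] at h2
      exact h2
    have hshift : shift (pf j₀) c = shift e (shift (pf (j₀ - 1)) c) := by
      rw [shift_shift]
      congr 1
      rw [he_def]
      ring
    refine ⟨pf j₀, hnorm j₀ hj₀k, ?_, hj₀n⟩
    rw [hshift]
    exact pp_shift e (hUshift e) hprev (by omega)
  set E := fun N : ℕ => {x : Config A | ∃ v : ℤ × ℤ, N ≤ normZ v ∧
    (Pp (m₀ + 1) U (shift v c) ∧ ¬ Pp CAP U (shift v c)) ∧ x = shift v c} with hE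
  have hEne : ∀ N, (E N).Nonempty := by
    intro N
    rcases hG N with ⟨v, h1, h2, h3⟩
    exact ⟨shift v c, v, h1, ⟨h2, h3⟩, rfl⟩
  have hEmono : ∀ N, E (N + 1) ⊆ E N := by
    rintro N x ⟨v, h1, h2, rfl⟩
    exact ⟨v, by omega, h2, rfl⟩
  obtain ⟨x₀, hx₀⟩ := inter_closure_nonempty hEne hEmono
  have hx₀L : x₀ ∈ L := by
    apply Set.mem_iInter.2
    intro R
    have := Set.mem_iInter.1 hx₀ R
    exact closure_mono (by rintro z ⟨v, h1, _, rfl⟩; exact ⟨v, h1, rfl⟩) this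
  have hx₀P : Pp (m₀ + 1) U x₀ := by
    have h1 := Set.mem_iInter.1 hx₀ 0
    have h2 : E 0 ⊆ {x : Config A | Pp (m₀ + 1) U x} := by
      rintro z ⟨v, _, ⟨hp, _⟩, rfl⟩
      exact hp
    have := closure_mono h2 h1
    rwa [(isClosed_pp hfin).closure_eq] at this
  have hx₀N : ¬ Pp CAP U x₀ := by
    have h1 := Set.mem_iInter.1 hx₀ 0
    have h2 : E 0 ⊆ {x : Config A | ¬ Pp CAP U x} := by
      rintro z ⟨v, _, ⟨_, hn⟩, rfl⟩
      exact hn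
    have h3 : IsClosed {x : Config A | ¬ Pp CAP U x} := by
      have : {x : Config A | ¬ Pp CAP U x} = {x : Config A | Pp CAP U x}ᶜ := rfl
      rw [this]
      exact (isOpen_pp hfin).isClosed_compl
    have := closure_mono h2 h1
    rwa [h3.closure_eq] at this
  rcases hx₀P with ⟨u, hu, hagr⟩
  have hx₀u : x₀ = u := hm₀ u hu x₀ hx₀L (hagr.mono (by omega))
  exact hx₀N ⟨u, hu, hx₀u ▸ agr_refl _ _⟩

/-! ### the 1D barrier argument -/

lemma sOrb_shift (s' : ℤ × ℤ) (w : Config A) (k : ℤ) :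
    ∀ u ∈ sOrb s' w, shift (k * s'.1, k * s'.2) u ∈ sOrb s' w := by
  rintro _ ⟨m, rfl⟩
  have e2 : ((k * s'.1, k * s'.2) + (m * s'.1, m * s'.2) : ℤ × ℤ)
      = ((m + k) * s'.1, (m + k) * s'.2) := by
    apply Prod.ext
    · show k * s'.1 + m * s'.1 = (m + k) * s'.1
      ring
    · show k * s'.2 + m * s'.2 = (m + k) * s'.2
      ring
  refine ⟨m + k, ?_⟩
  show shift ((m + k) * s'.1, (m + k) * s'.2) w
      = shift (k * s'.1, k * s'.2) (shift (m * s'.1, m * s'.2) w)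
  rw [shift_shift, e2]

lemma barrier_1d {c w : Config A} (s' : ℤ × ℤ) (hw : w ∈ omegaP s' c)
    (hfin : (sOrb s' w).Finite)
    (hiso : ∀ u ∈ sOrb s' w, IsoIn (omegaP s' c) u) : omegaP s' c ⊆ sOrb s' w := by
  classical
  choose! rad hrad using hiso
  set U := sOrb s' w with hUdef
  set K := omegaP s' c with hKdef
  set m₀ := hfin.toFinset.sup rad with hm₀def
  have hm₀ : ∀ u ∈ U, ∀ z ∈ K, Agr m₀ z u → z = u := by
    intro u hu z hz hagr
    exact hrad u hu z hz (hagr.mono (Finset.le_sup (hfin.mem_toFinset.2 hu)))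
  set CAP := m₀ + normZ s' + 1 with hCAP
  by_contra hcon
  rw [Set.not_subset] at hcon
  obtain ⟨y, hyK, hyU⟩ := hcon
  have hUstep : ∀ u ∈ U, shift s' u ∈ U := by
    intro u hu
    have h2 := sOrb_shift s' w 1 u hu
    simpa using h2
  have hynp : ∀ x, Agr CAP x y → ¬ Pp m₀ U x := by
    rintro x hxy ⟨u, hu, hxu⟩
    exact hyU (hm₀ u hu y hyK ((hxy.symm.mono (by omega)).trans (hxu.mono (by omega))) ▸ hu)
  have hG : ∀ N : ℕ, ∃ n : ℤ, (N : ℤ) ≤ n ∧ Pp (m₀ + 1) U (shift (n * s'.1, n * s'.2) c) ∧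
      ¬ Pp CAP U (shift (n * s'.1, n * s'.2) c) := by
    intro N
    have hw' := Set.mem_iInter.1 hw N
    rcases mem_closure_iff_agr.1 hw' CAP with ⟨x1, ⟨n₁, hn₁, rfl⟩, hagr1⟩
    have hPn₁ : Pp CAP U (shift (n₁ * s'.1, n₁ * s'.2) c) := ⟨w, ⟨0, by simp; funext u; simp [shift]; rw [Prod.mk_zero_zero, add_zero]⟩, hagr1⟩
    have hy' := Set.mem_iInter.1 hyK (n₁.toNat + 1)
    rcases mem_closure_iff_agr.1 hy' CAP with ⟨x2, ⟨n₂, hn₂, rfl⟩, hagr2⟩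
    have hn₁₂ : n₁ < n₂ := by
      have : ((n₁.toNat + 1 : ℕ) : ℤ) ≤ n₂ := hn₂
      have h0 : (0 : ℤ) ≤ n₁ := le_trans (by exact_mod_cast Nat.zero_le N) hn₁
      omega
    have hnPn₂ : ¬ Pp m₀ U (shift (n₂ * s'.1, n₂ * s'.2) c) := hynp _ hagr2
    set AA := (Finset.Ico n₁ n₂).filter
      (fun n => Pp CAP U (shift (n * s'.1, n * s'.2) c)) with hAA
    have hAne : AA.Nonempty := ⟨n₁, Finset.mem_filter.2 ⟨Finset.mem_Ico.2 ⟨le_rfl, hn₁₂⟩, hPn₁⟩⟩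
    set nn := AA.max' hAne with hnn
    have hnnA := AA.max'_mem hAne
    rw [Finset.mem_filter, Finset.mem_Ico] at hnnA
    obtain ⟨⟨hnn1, hnn2⟩, hnnP⟩ := hnnA
    have hstepeq : shift ((nn + 1) * s'.1, (nn + 1) * s'.2) c
        = shift s' (shift (nn * s'.1, nn * s'.2) c) := by
      rw [shift_shift]
      have e2 : (s' + (nn * s'.1, nn * s'.2) : ℤ × ℤ)
          = ((nn + 1) * s'.1, (nn + 1) * s'.2) := by
        apply Prod.ext
        · show s'.1 + nn * s'.1 = (nn + 1) * s'.1
          ring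
        · show s'.2 + nn * s'.2 = (nn + 1) * s'.2
          ring
      rw [e2]
    have hPnext : Pp (m₀ + 1) U (shift ((nn + 1) * s'.1, (nn + 1) * s'.2) c) := by
      rw [hstepeq]
      exact pp_shift s' hUstep hnnP (by omega)
    have hNnext : ¬ Pp CAP U (shift ((nn + 1) * s'.1, (nn + 1) * s'.2) c) := by
      rcases eq_or_lt_of_le (show nn + 1 ≤ n₂ from by omega) with heq | hlt
      · rw [heq]
        exact fun h => hnPn₂ (pp_mono h (by omega))
      · intro h
        have : nn + 1 ∈ AA := Finset.mem_filter.2 ⟨Finset.mem_Ico.2 ⟨by omega, hlt⟩, h⟩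
        have := AA.le_max' _ this
        omega
    exact ⟨nn + 1, by omega, hPnext, hNnext⟩
  set E := fun N : ℕ => {x : Config A | ∃ n : ℤ, (N : ℤ) ≤ n ∧
    (Pp (m₀ + 1) U (shift (n * s'.1, n * s'.2) c) ∧
      ¬ Pp CAP U (shift (n * s'.1, n * s'.2) c)) ∧ x = shift (n * s'.1, n * s'.2) c} with hE
  have hEne : ∀ N, (E N).Nonempty := by
    intro N
    rcases hG N with ⟨n, h1, h2, h3⟩
    exact ⟨_, n, h1, ⟨h2, h3⟩, rfl⟩
  have hEmono : ∀ N, E (N + 1) ⊆ E N := by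
    rintro N x ⟨n, h1, h2, rfl⟩
    refine ⟨n, ?_, h2, rfl⟩
    have hcast : ((N : ℤ)) ≤ ((N + 1 : ℕ) : ℤ) := by push_cast; omega
    omega
  obtain ⟨x₀, hx₀⟩ := inter_closure_nonempty hEne hEmono
  have hx₀K : x₀ ∈ K := by
    apply Set.mem_iInter.2
    intro N
    have := Set.mem_iInter.1 hx₀ N
    exact closure_mono (by rintro z ⟨n, h1, _, rfl⟩; exact ⟨n, h1, rfl⟩) this
  have hx₀P : Pp (m₀ + 1) U x₀ := by
    have h1 := Set.mem_iInter.1 hx₀ 0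
    have h2 : E 0 ⊆ {x : Config A | Pp (m₀ + 1) U x} := by
      rintro z ⟨n, _, ⟨hp, _⟩, rfl⟩
      exact hp
    have := closure_mono h2 h1
    rwa [(isClosed_pp hfin).closure_eq] at this
  have hx₀N : ¬ Pp CAP U x₀ := by
    have h1 := Set.mem_iInter.1 hx₀ 0
    have h2 : E 0 ⊆ {x : Config A | ¬ Pp CAP U x} := by
      rintro z ⟨n, _, ⟨_, hn⟩, rfl⟩
      exact hn
    have h3 : IsClosed {x : Config A | ¬ Pp CAP U x} := by
      have h4 : {x : Config A | ¬ Pp CAP U x} = {x : Config A | Pp CAP U x}ᶜ := rfl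
      rw [h4]
      exact (isOpen_pp hfin).isClosed_compl
    have := closure_mono h2 h1
    rwa [h3.closure_eq] at this
  rcases hx₀P with ⟨u, hu, hagr⟩
  have hx₀u : x₀ = u := hm₀ u hu x₀ hx₀K (hagr.mono (by omega))
  exact hx₀N ⟨u, hu, hx₀u ▸ agr_refl _ _⟩

/-! ### configurations with two independent periods lead to contradiction -/

lemma not_level0_elim {X : Set (Config A)} {c : Config A} (hcX : c ∈ X) (hnl : ¬ Level0 X c) :
    ∃ y ∈ X, Preceq y c ∧ ¬ Preceq c y := by
  rw [Level0] at hnl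
  push_neg at hnl
  exact hnl hcX

lemma finite_orbit_contra {X : Set (Config A)} (hX : IsSubshift X) {c : Config A}
    (hcX : c ∈ X) (hnl : ¬ Level0 X c) (t' t : ℤ × ℤ)
    (hdet : t'.1 * t.2 - t'.2 * t.1 ≠ 0) (hp1 : shift t' c = c) (hp2 : shift t c = c) :
    False := by
  have horb : orbit c ⊆ (fun g : ℤ × ℤ => shift g c) '' ((box (normZ t' + normZ t) : Finset (ℤ × ℤ)) : Set (ℤ × ℤ)) := by
    rintro _ ⟨v, rfl⟩
    obtain ⟨a, b, g, hveq, hg1, hg2⟩ := coset_decomp t' t hdet v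
    have hgbox : g ∈ box (normZ t' + normZ t) := by
      apply mem_box.2
      have b1 := abs_fst_le_normZ t'
      have b2 := abs_fst_le_normZ t
      have b3 := abs_snd_le_normZ t'
      have b4 := abs_snd_le_normZ t
      constructor <;> (push_cast; omega)
    refine ⟨g, hgbox, ?_⟩
    show shift g c = shift v c
    have h1 : shift (a * t'.1, a * t'.2) c = c := shift_period_smul hp1 a
    have h2 : shift (b * t.1, b * t.2) c = c := shift_period_smul hp2 b
    have hv2 : v = g + ((a * t'.1, a * t'.2) + (b * t.1, b * t.2)) := by
      apply Prod.ext
      · show v.1 = g.1 + (a * t'.1 + b * t.1)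
        rw [hveq]
        show a * t'.1 + b * t.1 + g.1 = _
        ring
      · show v.2 = g.2 + (a * t'.2 + b * t.2)
        rw [hveq]
        show a * t'.2 + b * t.2 + g.2 = _
        ring
    rw [hv2, ← shift_shift, ← shift_shift, h2, h1]
  have hfin : (orbit c).Finite :=
    Set.Finite.subset (((box (normZ t' + normZ t)).finite_toSet).image _) horb
  obtain ⟨y₀, hy₀X, hy₀p, hy₀n⟩ := not_level0_elim hcX hnl
  have hy₀orb : y₀ ∈ orbit c := by
    have := hfin.isClosed.closure_eq
    rw [Preceq, this] at hy₀p
    exact hy₀p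
  rcases hy₀orb with ⟨v, rfl⟩
  exact hy₀n (preceq_shift_right v c)

/-! ### isolation of c in its orbit closure -/

lemma isoIn_shift_of {K : Set (Config A)} {v : ℤ × ℤ} (hKv : ∀ z ∈ K, shift (-v) z ∈ K)
    {w : Config A} (h : IsoIn K w) : IsoIn K (shift v w) := by
  rcases h with ⟨n, hn⟩
  refine ⟨n + normZ v, fun z hz hagr => ?_⟩
  have h2 : Agr n (shift (-v) z) (shift (-v) (shift v w)) := by
    apply agr_shift
    rw [normZ_neg]
    exact hagr
  rw [shift_shift] at h2
  simp only [neg_add_cancel, shift_zero] at h2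
  have h3 : shift (-v) z = w := hn _ (hKv z hz) h2
  have h4 := congrArg (shift v) h3
  rw [shift_shift] at h4
  simp only [add_neg_cancel, shift_zero] at h4
  exact h4

lemma iso_c {X : Set (Config A)} (hX : IsSubshift X) (hcount : X.Countable) {c : Config A}
    (hcX : c ∈ X) : IsoIn (closure (orbit c)) c := by
  set Y := closure (orbit c) with hY
  have hYX : Y ⊆ X := subset_of_subshift hX hcX
  obtain ⟨w, hwY, n, hw⟩ := exists_isolated isClosed_closure (hcount.mono hYX)
    ⟨c, subset_closure (mem_orbit_self c)⟩
  rcases mem_closure_iff_agr.1 hwY n with ⟨x, ⟨v, rfl⟩, hagr⟩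
  have hxY : shift v c ∈ Y := subset_closure (shift_mem_orbit v c)
  have hvw : shift v c = w := hw _ hxY hagr
  have hcw : c = shift (-v) w := by
    rw [← hvw, shift_shift]
    simp
  rw [hcw]
  exact isoIn_shift_of (fun z hz => inv_closure_orbit c _ z hz) ⟨n, hw⟩

/-! ### the `omega` limit sets contain no configuration equivalent to `c` -/

lemma omegaP_kill {X : Set (Config A)} (hX : IsSubshift X) (hcount : X.Countable)
    {c : Config A} (hcX : c ∈ X) (hnl : ¬ Level0 X c) {t : ℤ × ℤ} (ht0 : t ≠ 0)
    (htper : shift t c = c) (s' : ℤ × ℤ)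
    (hs' : s' = (-t.2, t.1) ∨ s' = (t.2, -t.1)) :
    ∀ z ∈ omegaP s' c, ¬ Preceq c z := by
  intro z hz hpz
  set Y := closure (orbit c) with hY
  have hzY : z ∈ Y := omegaP_subset_Y s' c hz
  -- every element of Y is t-periodic
  have ht_all : ∀ y ∈ Y, shift t y = y := by
    intro y hy
    set F : Set (Config A) := {y | ∀ d : ℤ × ℤ, y (d + t) = y d} with hF
    have hFcl : IsClosed F := by
      have hFeq : F = ⋂ d : ℤ × ℤ, {y : Config A | y (d + t) = y d} := by
        ext y; simp [hF]
      rw [hFeq]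
      exact isClosed_iInter fun d => isClosed_eq (continuous_apply _) (continuous_apply _)
    have horbF : orbit c ⊆ F := by
      rintro _ ⟨v, rfl⟩
      intro d
      have h5 := congrFun htper (d + v)
      have h6 : c (d + v + t) = c (d + v) := h5
      show c (d + t + v) = c (d + v)
      rw [show d + t + v = d + v + t from by ring]
      exact h6
    have : y ∈ F := closure_minimal horbF hFcl hy
    funext d
    exact this d
  -- non-degeneracy
  have htc : t.1 ≠ 0 ∨ t.2 ≠ 0 := by
    by_contra hcc
    push_neg at hcc
    exact ht0 (Prod.ext hcc.1 hcc.2)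
  have hQ : 0 < t.1 * t.1 + t.2 * t.2 := by
    have q1 := mul_self_nonneg t.1
    have q2 := mul_self_nonneg t.2
    rcases htc with hc1 | hc1
    · have := mul_self_pos.2 hc1
      linarith
    · have := mul_self_pos.2 hc1
      linarith
  have hdet : s'.1 * t.2 - s'.2 * t.1 ≠ 0 := by
    rcases hs' with rfl | rfl
    · show (-t.2) * t.2 - t.1 * t.1 ≠ 0
      intro hcc
      linarith
    · show t.2 * t.2 - (-t.1) * t.1 ≠ 0
      intro hcc
      linarith
  -- orbit of z decomposes into finitely many shifted s'-orbits
  set GB := box (normZ s' + normZ t) with hGB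
  have horbz : orbit z ⊆ ⋃ g ∈ GB, shift g '' sOrb s' z := by
    rintro _ ⟨v, rfl⟩
    obtain ⟨a, b, g, hveq, hg1, hg2⟩ := coset_decomp s' t hdet v
    have hgbox : g ∈ GB := by
      apply mem_box.2
      have b1 := abs_fst_le_normZ s'
      have b2 := abs_fst_le_normZ t
      have b3 := abs_snd_le_normZ s'
      have b4 := abs_snd_le_normZ t
      constructor <;> (push_cast; omega)
    apply Set.mem_biUnion hgbox
    refine ⟨shift (a * s'.1, a * s'.2) z, ⟨a, rfl⟩, ?_⟩
    show shift g (shift (a * s'.1, a * s'.2) z) = shift v z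
    have h2 : shift (b * t.1, b * t.2) z = z := shift_period_smul (ht_all z hzY) b
    have hv2 : v = g + ((a * s'.1, a * s'.2) + (b * t.1, b * t.2)) := by
      apply Prod.ext
      · show v.1 = g.1 + (a * s'.1 + b * t.1)
        rw [hveq]
        show a * s'.1 + b * t.1 + g.1 = _
        ring
      · show v.2 = g.2 + (a * s'.2 + b * t.2)
        rw [hveq]
        show a * s'.2 + b * t.2 + g.2 = _
        ring
    rw [hv2, ← shift_shift, ← shift_shift, h2]
  -- c sits in one of the shifted closures
  have hcu : c ∈ ⋃ g ∈ GB, closure (shift g '' sOrb s' z) := by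
    have h1 : c ∈ closure (⋃ g ∈ GB, shift g '' sOrb s' z) :=
      closure_mono horbz hpz
    rwa [GB.closure_biUnion] at h1
  rcases Set.mem_iUnion₂.1 hcu with ⟨g, hgGB, hcg⟩
  rw [← shift_image_closure] at hcg
  rcases hcg with ⟨x', hx'cl, hx'eq⟩
  have hx'om : x' ∈ omegaP s' c := by
    have hsub : sOrb s' z ⊆ omegaP s' c := by
      rintro _ ⟨k, rfl⟩
      exact omegaP_shift_smul hz k
    exact closure_minimal hsub (isClosed_omegaP s' c) hx'cl
  have hx'c : x' = shift (-g) c := by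
    rw [← hx'eq, shift_shift]
    simp
  -- x' is isolated in Y
  have hYinv : Inv Y := inv_closure_orbit c
  have hx'iso : IsoIn Y x' := by
    rw [hx'c]
    exact isoIn_shift_of (fun z' hz' => hYinv _ z' hz') (iso_c hX hcount hcX)
  rcases hx'iso with ⟨m, hm⟩
  -- returns: for every N there is n ≥ N with shift (n s') c = x'
  have hret : ∀ N : ℕ, ∃ n : ℤ, (N : ℤ) ≤ n ∧ shift (n * s'.1, n * s'.2) c = x' := by
    intro N
    have h1 := Set.mem_iInter.1 hx'om N
    rcases mem_closure_iff_agr.1 h1 m with ⟨el, ⟨n, hn, rfl⟩, hagr⟩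
    have helY : shift (n * s'.1, n * s'.2) c ∈ Y := subset_closure (shift_mem_orbit _ c)
    exact ⟨n, hn, hm _ helY hagr⟩
  -- choose n large enough
  set Kb : ℤ := ((normZ s' : ℤ) + (normZ t : ℤ)) * (|s'.1| + |s'.2|) with hKb
  have hKb0 : 0 ≤ Kb := by
    apply mul_nonneg
    · have := Int.ofNat_nonneg (normZ s')
      have := Int.ofNat_nonneg (normZ t)
      omega
    · have := abs_nonneg s'.1
      have := abs_nonneg s'.2
      omega
  obtain ⟨n, hnN, hneq⟩ := hret (Kb.toNat + 1)
  have hnKb : Kb + 1 ≤ n := by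
    have : ((Kb.toNat + 1 : ℕ) : ℤ) ≤ n := hnN
    omega
  set t' : ℤ × ℤ := (n * s'.1 + g.1, n * s'.2 + g.2) with ht'
  have hper' : shift t' c = c := by
    have h1 : shift g (shift (n * s'.1, n * s'.2) c) = shift g x' := by rw [hneq]
    rw [hx'c, shift_shift, shift_shift] at h1
    simp only [add_neg_cancel, shift_zero] at h1
    have h2 : (g + (n * s'.1, n * s'.2) : ℤ × ℤ) = t' := by
      apply Prod.ext
      · show g.1 + n * s'.1 = n * s'.1 + g.1
        ring
      · show g.2 + n * s'.2 = n * s'.2 + g.2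
        ring
    rw [h2] at h1
    exact h1
  -- the dot product of t' with s' is positive
  have hgs : |g.1 * s'.1 + g.2 * s'.2| ≤ Kb := by
    obtain ⟨hgb1, hgb2⟩ := mem_box.1 hgGB
    push_cast at hgb1 hgb2
    have h1 : |g.1 * s'.1 + g.2 * s'.2| ≤ |g.1| * |s'.1| + |g.2| * |s'.2| := by
      calc |g.1 * s'.1 + g.2 * s'.2| ≤ |g.1 * s'.1| + |g.2 * s'.2| := abs_add_le _ _
        _ = |g.1| * |s'.1| + |g.2| * |s'.2| := by rw [abs_mul, abs_mul]
    have h2 : |g.1| * |s'.1| ≤ ((normZ s' : ℤ) + (normZ t : ℤ)) * |s'.1| :=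
      mul_le_mul_of_nonneg_right (by omega) (abs_nonneg _)
    have h3 : |g.2| * |s'.2| ≤ ((normZ s' : ℤ) + (normZ t : ℤ)) * |s'.2| :=
      mul_le_mul_of_nonneg_right (by omega) (abs_nonneg _)
    have h4 : ((normZ s' : ℤ) + (normZ t : ℤ)) * |s'.1| + ((normZ s' : ℤ) + (normZ t : ℤ)) * |s'.2| = Kb := by
      rw [hKb]; ring
    omega
  have hD : 1 ≤ s'.1 * s'.1 + s'.2 * s'.2 := by
    rcases hs' with rfl | rfl
    · show 1 ≤ (-t.2) * (-t.2) + t.1 * t.1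
      nlinarith
    · show 1 ≤ t.2 * t.2 + (-t.1) * (-t.1)
      nlinarith
  have hdot : 0 < t'.1 * s'.1 + t'.2 * s'.2 := by
    have h1 : t'.1 * s'.1 + t'.2 * s'.2
        = n * (s'.1 * s'.1 + s'.2 * s'.2) + (g.1 * s'.1 + g.2 * s'.2) := by
      rw [ht']
      show (n * s'.1 + g.1) * s'.1 + (n * s'.2 + g.2) * s'.2 = _
      ring
    have h2 : n ≤ n * (s'.1 * s'.1 + s'.2 * s'.2) := by
      have h5 := mul_le_mul_of_nonneg_left hD (show (0 : ℤ) ≤ n from by omega)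
      simpa using h5
    have h3 := abs_le.1 hgs
    rw [h1]
    linarith [h3.1, h3.2, hnKb, hKb0]
  have hdet2 : t'.1 * t.2 - t'.2 * t.1 ≠ 0 := by
    rcases hs' with hss | hss
    · intro hcc
      rw [hss] at hdot
      have : t'.1 * (-t.2) + t'.2 * t.1 = -(t'.1 * t.2 - t'.2 * t.1) := by ring
      rw [this, hcc] at hdot
      simp at hdot
    · intro hcc
      rw [hss] at hdot
      have : t'.1 * t.2 + t'.2 * (-t.1) = t'.1 * t.2 - t'.2 * t.1 := by ring
      rw [this, hcc] at hdot
      simp at hdot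
  exact finite_orbit_contra hX hcX hnl t' t hdet2 hper' htper

/-! ### orbit decomposition for periodic configurations -/

lemma orbit_decomp {x : Config A} (s' t : ℤ × ℤ) (hdet : s'.1 * t.2 - s'.2 * t.1 ≠ 0)
    (hxt : shift t x = x) :
    orbit x ⊆ ⋃ g ∈ box (normZ s' + normZ t), shift g '' sOrb s' x := by
  rintro _ ⟨v, rfl⟩
  obtain ⟨a, b, g, hveq, hg1, hg2⟩ := coset_decomp s' t hdet v
  have hgbox : g ∈ box (normZ s' + normZ t) := by
    apply mem_box.2
    have b1 := abs_fst_le_normZ s'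
    have b2 := abs_fst_le_normZ t
    have b3 := abs_snd_le_normZ s'
    have b4 := abs_snd_le_normZ t
    constructor <;> (push_cast; omega)
  apply Set.mem_biUnion hgbox
  refine ⟨shift (a * s'.1, a * s'.2) x, ⟨a, rfl⟩, ?_⟩
  show shift g (shift (a * s'.1, a * s'.2) x) = shift v x
  have h2 : shift (b * t.1, b * t.2) x = x := shift_period_smul hxt b
  have hv2 : v = g + ((a * s'.1, a * s'.2) + (b * t.1, b * t.2)) := by
    apply Prod.ext
    · show v.1 = g.1 + (a * s'.1 + b * t.1)
      rw [hveq]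
      show a * s'.1 + b * t.1 + g.1 = _
      ring
    · show v.2 = g.2 + (a * s'.2 + b * t.2)
      rw [hveq]
      show a * s'.2 + b * t.2 + g.2 = _
      ring
  rw [hv2, ← shift_shift, ← shift_shift, h2]

/-! ### main theorem -/

theorem main_aux {A : Type*} [Fintype A] [Nonempty A] [TopologicalSpace A] [DiscreteTopology A]
    (X : Set (Config A)) (hX : IsSubshift X) (hcount : X.Countable)
    (c : Config A) (hc : Level1 X c) :
    ∃ y₁ ∈ X, ∃ y₂ ∈ X, ∀ y ∈ X, Prec y c → OrbEquiv y y₁ ∨ OrbEquiv y y₂ := by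
  classical
  obtain ⟨hcX, hnl, hlev⟩ := hc
  set Y := closure (orbit c) with hYdef
  have hYX : Y ⊆ X := subset_of_subshift hX hcX
  have hYcount : Y.Countable := hcount.mono hYX
  have hciso : IsoIn Y c := iso_c hX hcount hcX
  by_cases hper : ∃ t : ℤ × ℤ, t ≠ 0 ∧ shift t c = c
  · -- periodic case
    obtain ⟨t, ht0, htper⟩ := hper
    set sv : ℤ × ℤ := (-t.2, t.1) with hsv
    have hsneg : -sv = (t.2, -t.1) := by
      apply Prod.ext <;> simp [hsv]
    have hside : ∀ s' : ℤ × ℤ, (s' = (-t.2, t.1) ∨ s' = (t.2, -t.1)) →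
        ∃ z₀ ∈ X, omegaP s' c ⊆ sOrb s' z₀ ∧ z₀ ∈ omegaP s' c := by
      intro s' hs'
      have hkill : ∀ z ∈ omegaP s' c, ¬ Preceq c z :=
        omegaP_kill hX hcount hcX hnl ht0 htper s' hs'
      have hWY : omegaP s' c ⊆ Y := omegaP_subset_Y s' c
      obtain ⟨z₀, hz₀W, hz₀iso⟩ := exists_isolated (isClosed_omegaP s' c)
        (hYcount.mono hWY) (omegaP_nonempty s' c)
      have hz₀X : z₀ ∈ X := hYX (hWY hz₀W)
      have hz₀lev : Level0 X z₀ := hlev z₀ hz₀X ⟨hWY hz₀W, hkill z₀ hz₀W⟩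
      obtain ⟨hofin, hoeq⟩ := orbit_finite_of_level0 hX hcount hz₀lev
      have horbfin : (orbit z₀).Finite := hoeq ▸ hofin
      have hsfin : (sOrb s' z₀).Finite :=
        horbfin.subset (by rintro _ ⟨k, rfl⟩; exact shift_mem_orbit _ _)
      have hsiso : ∀ u ∈ sOrb s' z₀, IsoIn (omegaP s' c) u := by
        rintro _ ⟨k, rfl⟩
        apply isoIn_shift_of _ hz₀iso
        intro x hx
        have hvec : (-(k * s'.1, k * s'.2) : ℤ × ℤ) = ((-k) * s'.1, (-k) * s'.2) := by
          apply Prod.ext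
          · show -(k * s'.1) = (-k) * s'.1
            ring
          · show -(k * s'.2) = (-k) * s'.2
            ring
        rw [hvec]
        exact omegaP_shift_smul hx (-k)
      exact ⟨z₀, hz₀X, barrier_1d s' hz₀W hsfin hsiso, hz₀W⟩
    obtain ⟨zP, hzPX, hzPsub, _⟩ := hside sv (Or.inl rfl)
    obtain ⟨zM, hzMX, hzMsub, _⟩ := hside (-sv) (Or.inr hsneg)
    refine ⟨zP, hzPX, zM, hzMX, ?_⟩
    rintro y hyX ⟨hyc, hcy⟩
    -- decompose the position of y
    have hdet : sv.1 * t.2 - sv.2 * t.1 ≠ 0 := by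
      have htc : t.1 ≠ 0 ∨ t.2 ≠ 0 := by
        by_contra hcc
        push_neg at hcc
        exact ht0 (Prod.ext hcc.1 hcc.2)
      show (-t.2) * t.2 - t.1 * t.1 ≠ 0
      intro hcc
      have q1 := mul_self_nonneg t.1
      have q2 := mul_self_nonneg t.2
      rcases htc with hc1 | hc1
      · have := mul_self_pos.2 hc1
        linarith
      · have := mul_self_pos.2 hc1
        linarith
    have hyY : y ∈ closure (⋃ g ∈ box (normZ sv + normZ t), shift g '' sOrb sv c) :=
      closure_mono (orbit_decomp sv t hdet htper) hyc
    rw [(box (normZ sv + normZ t)).closure_biUnion] at hyY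
    rcases Set.mem_iUnion₂.1 hyY with ⟨g, hgbox, hyg⟩
    rw [← shift_image_closure] at hyg
    rcases hyg with ⟨x', hx'cl, rfl⟩
    -- x' is not a shifted copy of c along the s-orbit
    have hnotmid : ∀ k : ℤ, x' ≠ shift (k * sv.1, k * sv.2) c := by
      intro k hk
      apply hcy
      rw [hk, shift_shift]
      exact preceq_shift_right _ c
    -- x' lies in one of the two omega limit sets
    have htails : ∀ N : ℕ, x' ∈ closure (tailP sv c N) ∪ closure (tailP (-sv) c N) := by
      intro N
      have hsplit : sOrb sv c ⊆ tailP sv c N ∪ tailP (-sv) c N ∪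
          ((fun k : ℤ => shift (k * sv.1, k * sv.2) c) '' {k : ℤ | |k| < (N : ℤ)}) := by
        rintro _ ⟨k, rfl⟩
        rcases le_or_gt (N : ℤ) k with hk | hk
        · exact Or.inl (Or.inl ⟨k, hk, rfl⟩)
        · rcases le_or_gt k (-(N : ℤ)) with hk2 | hk2
          · refine Or.inl (Or.inr ⟨-k, by omega, ?_⟩)
            show shift (k * sv.1, k * sv.2) c = shift (-k * (-sv).1, -k * (-sv).2) c
            have hvec : ((-k * (-sv).1, -k * (-sv).2) : ℤ × ℤ) = (k * sv.1, k * sv.2) := by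
              apply Prod.ext
              · show -k * (-sv).1 = k * sv.1
                have h5 : (-sv).1 = -sv.1 := rfl
                rw [h5]; ring
              · show -k * (-sv).2 = k * sv.2
                have h5 : (-sv).2 = -sv.2 := rfl
                rw [h5]; ring
            rw [hvec]
          · refine Or.inr ⟨k, ?_, rfl⟩
            show |k| < (N : ℤ)
            rw [abs_lt]
            omega
      have hmidfin : ((fun k : ℤ => shift (k * sv.1, k * sv.2) c) ''
          {k : ℤ | |k| < (N : ℤ)}).Finite := by
        apply Set.Finite.image
        have hsub3 : {k : ℤ | |k| < (N : ℤ)} ⊆ ((Finset.Icc (-(N : ℤ)) (N : ℤ) : Finset ℤ) : Set ℤ) := by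
          intro k hk
          have hk2 : |k| < (N : ℤ) := hk
          simp only [Finset.coe_Icc, Set.mem_Icc]
          have := abs_lt.1 hk2
          omega
        exact (Set.Finite.subset (Finset.Icc _ _).finite_toSet hsub3)
      have h1 : x' ∈ closure (tailP sv c N ∪ tailP (-sv) c N ∪
          ((fun k : ℤ => shift (k * sv.1, k * sv.2) c) '' {k : ℤ | |k| < (N : ℤ)})) :=
        closure_mono hsplit hx'cl
      rw [closure_union, closure_union, hmidfin.isClosed.closure_eq] at h1
      rcases h1 with h1 | h1
      · exact h1
      · exfalso
        rcases h1 with ⟨k, _, hk⟩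
        exact hnotmid k hk.symm
    have homega : x' ∈ omegaP sv c ∨ x' ∈ omegaP (-sv) c := by
      by_contra hcc
      push_neg at hcc
      obtain ⟨h1, h2⟩ := hcc
      rw [omegaP, Set.mem_iInter] at h1 h2
      push_neg at h1 h2
      obtain ⟨N₁, hN₁⟩ := h1
      obtain ⟨N₂, hN₂⟩ := h2
      rcases htails (N₁ + N₂) with h | h
      · apply hN₁
        apply closure_mono _ h
        rintro _ ⟨n, hn, rfl⟩
        exact ⟨n, by push_cast at hn ⊢; omega, rfl⟩
      · apply hN₂
        apply closure_mono _ h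
        rintro _ ⟨n, hn, rfl⟩
        exact ⟨n, by push_cast at hn ⊢; omega, rfl⟩
    rcases homega with hom | hom
    · left
      rcases hzPsub hom with ⟨k, hk⟩
      rw [← hk, shift_shift]
      exact orbEquiv_shift _ zP
    · right
      rcases hzMsub hom with ⟨k, hk⟩
      rw [← hk, shift_shift]
      exact orbEquiv_shift _ zM
  · -- aperiodic case
    have hLC : ∀ x ∈ limitSet c, ¬ Preceq c x := by
      intro x hx hpx
      have hsub : closure (orbit x) ⊆ limitSet c :=
        closure_minimal (by rintro _ ⟨v, rfl⟩; exact limitSet_shift hx v) (isClosed_limitSet c)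
      have hcl : c ∈ limitSet c := hsub hpx
      have h1 := Set.mem_iInter.1 hcl 1
      rcases hciso with ⟨n, hn⟩
      rcases mem_closure_iff_agr.1 h1 n with ⟨el, ⟨v, hv1, rfl⟩, hagr⟩
      have helY : shift v c ∈ Y := subset_closure (shift_mem_orbit v c)
      have hvc : shift v c = c := hn _ helY hagr
      apply hper
      refine ⟨v, ?_, hvc⟩
      intro h0
      rw [h0] at hv1
      simp [normZ] at hv1
    have hLY : limitSet c ⊆ Y := limitSet_subset_Y c
    obtain ⟨z₀, hz₀L, hz₀iso⟩ := exists_isolated (isClosed_limitSet c)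
      (hYcount.mono hLY) (limitSet_nonempty c)
    have hz₀X : z₀ ∈ X := hYX (hLY hz₀L)
    have hz₀lev : Level0 X z₀ := hlev z₀ hz₀X ⟨hLY hz₀L, hLC z₀ hz₀L⟩
    obtain ⟨hofin, hoeq⟩ := orbit_finite_of_level0 hX hcount hz₀lev
    have horbfin : (orbit z₀).Finite := hoeq ▸ hofin
    have hiso : ∀ u ∈ orbit z₀, IsoIn (limitSet c) u := by
      rintro _ ⟨v, rfl⟩
      exact isoIn_shift_of (fun x hx => limitSet_shift hx (-v)) hz₀iso
    have hbar : limitSet c ⊆ orbit z₀ := barrier_2d hz₀L horbfin hiso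
    refine ⟨z₀, hz₀X, z₀, hz₀X, ?_⟩
    rintro y hyX ⟨hyc, hcy⟩
    left
    have hyL : y ∈ limitSet c := by
      apply Set.mem_iInter.2
      intro R
      set nearOrb := (fun v : ℤ × ℤ => shift v c) '' {v : ℤ × ℤ | normZ v < R} with hno
      have hsplit : orbit c ⊆ farOrb c R ∪ nearOrb := by
        rintro _ ⟨v, rfl⟩
        rcases le_or_gt R (normZ v) with hv | hv
        · exact Or.inl ⟨v, hv, rfl⟩
        · exact Or.inr ⟨v, hv, rfl⟩
      have hnofin : nearOrb.Finite := by
        apply Set.Finite.image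
        have hsub2 : {v : ℤ × ℤ | normZ v < R} ⊆ ((box R : Finset (ℤ × ℤ)) : Set (ℤ × ℤ)) := by
          intro v hv
          apply mem_box.2
          have h1 := abs_fst_le_normZ v
          have h2 := abs_snd_le_normZ v
          have h3 : (normZ v : ℤ) < (R : ℤ) := by exact_mod_cast hv
          omega
        exact Set.Finite.subset (box R).finite_toSet hsub2
      have h1 : y ∈ closure (farOrb c R) ∪ nearOrb := by
        have h2 := closure_mono hsplit hyc
        rwa [closure_union, hnofin.isClosed.closure_eq] at h2
      rcases h1 with h1 | h1
      · exact h1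
      · exfalso
        rcases h1 with ⟨v, _, hv⟩
        exact hcy (hv ▸ preceq_shift_right v c)
    rcases hbar hyL with ⟨v, hv⟩
    rw [← hv]
    exact orbEquiv_shift v z₀

theorem stmt9 {A : Type*} [Fintype A] [Nonempty A] [TopologicalSpace A] [DiscreteTopology A]
    (X : Set (Config A)) (hX : IsSubshift X) (hcount : X.Countable)
    (c : Config A) (hc : Level1 X c) :
    ∃ y₁ ∈ X, ∃ y₂ ∈ X, ∀ y ∈ X, Prec y c → OrbEquiv y y₁ ∨ OrbEquiv y y₂ := by
  exact main_aux X hX hcount c hc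

end CountableSubshift
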